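/- arXiv:1505.06100 — 7 statements merged into one kernel-verified Lean document; each statement's English description precedes it below -/
import Mathlib

section
/- Let A be a C*-algebra over ℂ and let v ∈ A satisfy v * star v * v = v (v is a partial isometry) and v * v = 0. Then for every t ∈ [0,1] the element γ(v,t) is a projection, i.e. star (γ(v,t)) = γ(v,t) and γ(v,t) * γ(v,t) = γ(v,t); moreover γ(v,0) = v * star v and γ(v,1) = star v * v. -/
/-- The path `γ(v,t) := t • (v* v) + √(t(1-t)) • (v + v*) + (1-t) • (v v*)`
from Lemma `NilPIPath` of the paper. -/
noncomputable def gammaPath {A : Type*} [NonUnitalCStarAlgebra A] (v : A) (t : ℝ) : A :=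
  ((t : ℝ) : ℂ) • (star v * v) + ((Real.sqrt (t * (1 - t)) : ℝ) : ℂ) • (v + star v) +
    ((1 - t : ℝ) : ℂ) • (v * star v)

/-- For a partial isometry `v` with `v * v = 0`, each `γ(v,t)` (for `t ∈ [0,1]`) is a
projection, and the path runs from `v * v*` (at `t = 0`) to `v* * v` (at `t = 1`). -/
theorem gammaPath_isProjection {A : Type*} [NonUnitalCStarAlgebra A] (v : A)
    (hv : v * star v * v = v) (hv2 : v * v = 0) :
    (∀ t ∈ Set.Icc (0 : ℝ) 1,
        star (gammaPath v t) = gammaPath v t ∧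
          gammaPath v t * gammaPath v t = gammaPath v t) ∧
      gammaPath v 0 = v * star v ∧ gammaPath v 1 = star v * v := by
  have h1 : star v * star v = 0 := by
    simpa [star_mul] using congrArg star hv2
  have hv' : star v * v * star v = star v := by
    simpa [star_mul, mul_assoc] using congrArg star hv
  have hqq : (v * star v) * (v * star v) = v * star v := by
    rw [mul_assoc, ← mul_assoc (star v) v (star v), hv']
  refine ⟨?_, ?_, ?_⟩
  · rintro t ⟨ht0, ht1⟩
    have ht1' : (0:ℝ) ≤ 1 - t := by linarith
    set a := Real.sqrt t with ha
    set b := Real.sqrt (1 - t) with hb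
    have hab : Real.sqrt (t * (1 - t)) = a * b := Real.sqrt_mul ht0 _
    have haC : ((a:ℂ)) * (a:ℂ) = ((t:ℝ):ℂ) := by
      rw [← Complex.ofReal_mul, Real.mul_self_sqrt ht0]
    have hbC : ((b:ℂ)) * (b:ℂ) = ((1 - t:ℝ):ℂ) := by
      rw [← Complex.ofReal_mul, Real.mul_self_sqrt ht1']
    set x := ((a : ℂ)) • v + ((b : ℂ)) • (v * star v) with hx
    have hstarx : star x = ((a:ℂ)) • star v + ((b:ℂ)) • (v * star v) := by
      simp [hx, star_smul, star_mul, mul_assoc, Complex.star_def, Complex.conj_ofReal]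
    have hv'' : star v * (v * star v) = star v := by rw [← mul_assoc]; exact hv'
    have hγ : gammaPath v t = star x * x := by
      rw [hstarx, hx]
      simp only [mul_add, add_mul, smul_mul_smul_comm]
      rw [hv, hqq, hv'', haC, hbC]
      simp only [gammaPath, hab, Complex.ofReal_mul]
      module
    refine ⟨?_, ?_⟩
    · rw [hγ, star_mul, star_star]
    · have hxx : x * star x = v * star v := by
        rw [hstarx, hx]
        simp only [mul_add, add_mul, smul_mul_smul_comm]
        rw [← mul_assoc v v (star v), hv2, zero_mul, smul_zero, zero_add,
          mul_assoc v (star v) (v * star v)]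
        rw [mul_assoc v (star v) (star v), h1, mul_zero, smul_zero, add_zero, hv'']
        rw [← add_smul, haC, hbC, ← Complex.ofReal_add]
        norm_num
      have hqx : (v * star v) * x = x := by
        rw [hx, mul_add, mul_smul_comm, mul_smul_comm, hv, hqq]
      rw [hγ, mul_assoc, ← mul_assoc x (star x) x, hxx, ← mul_assoc, mul_assoc (star x), hqx]
  · simp [gammaPath]
  · simp [gammaPath]
end

section
/- Let A be a C*-algebra, let m ≥ 1, and let w : Fin m → A satisfy relations (a)–(c). Then the element p := ∑_{i ∈ Fin m} star (w i) * w i is a projection (star p = p and p * p = p), and p is a two-sided unit for each generator: p * w j = w j and w j * p = w j for every j ∈ Fin m. -/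
/-- Given the circle-algebra relations (Lemma `UniversalCircle` of the paper), the element
`p := ∑ i, (w i)* (w i)` is a projection and acts as a two-sided unit on each generator. -/
theorem circleRelations_sum_is_unit_projection {A : Type*} [NonUnitalCStarAlgebra A]
    (m : ℕ) [NeZero m] (w : Fin m → A)
    (hpi : ∀ i : Fin m, w i * star (w i) * w i = w i)
    (hlink : ∀ i : Fin m, star (w i) * w i = w (i + 1) * star (w (i + 1)))
    (horth : ∀ i j : Fin m, i ≠ j → star (w i) * w j = 0) :
    star (∑ i : Fin m, star (w i) * w i) = ∑ i : Fin m, star (w i) * w i ∧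
    (∑ i : Fin m, star (w i) * w i) * (∑ i : Fin m, star (w i) * w i) =
      ∑ i : Fin m, star (w i) * w i ∧
    (∀ j : Fin m, (∑ i : Fin m, star (w i) * w i) * w j = w j) ∧
    (∀ j : Fin m, w j * (∑ i : Fin m, star (w i) * w i) = w j) := by
  -- orthogonality of the range projections
  have key : ∀ i j : Fin m, i ≠ j → (star (w i) * w i) * (star (w j) * w j) = 0 := by
    intro i j hij
    have h : star (w (i + 1)) * w (j + 1) = 0 :=
      horth _ _ (fun h => hij (add_right_cancel h))
    rw [hlink i, hlink j, mul_assoc, ← mul_assoc (star (w (i + 1))), h, zero_mul, mul_zero]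
  have hsq : ∀ i : Fin m, (star (w i) * w i) * (star (w i) * w i) = star (w i) * w i := by
    intro i
    rw [mul_assoc, ← mul_assoc (w i), hpi i]
  -- right multiplication by a generator
  have hterm_right : ∀ i j : Fin m,
      (star (w i) * w i) * w j = if i = j - 1 then w j else 0 := by
    intro i j
    by_cases h : i = j - 1
    · subst h
      rw [if_pos rfl, hlink, sub_add_cancel, hpi]
    · have hne : i + 1 ≠ j := fun hh => h (eq_sub_of_add_eq hh)
      rw [if_neg h, hlink i, mul_assoc, horth _ _ hne, mul_zero]
  -- left multiplication by a generator
  have hterm_left : ∀ i j : Fin m,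
      w j * (star (w i) * w i) = if i = j then w j else 0 := by
    intro i j
    by_cases h : i = j
    · subst h; rw [if_pos rfl, ← mul_assoc, hpi]
    · rw [if_neg h]
      have hx : star (w j * (star (w i) * w i)) * (w j * (star (w i) * w i)) = 0 := by
        have hstar : star (w j * (star (w i) * w i)) = (star (w i) * w i) * star (w j) := by
          simp [star_mul, mul_assoc]
        rw [hstar, mul_assoc (star (w i) * w i), ← mul_assoc (star (w j)),
          key j i (Ne.symm h), mul_zero]
      exact CStarRing.star_mul_self_eq_zero_iff _ |>.mp hx
  refine ⟨?_, ?_, ?_, ?_⟩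
  · rw [star_sum]
    exact Finset.sum_congr rfl fun i _ => by simp [star_mul, mul_assoc]
  · rw [Finset.sum_mul_sum]
    refine Finset.sum_congr rfl fun i _ => ?_
    rw [Finset.sum_eq_single i (fun j _ hj => key i j (Ne.symm hj))
      (fun h => absurd (Finset.mem_univ i) h), hsq]
  · intro j
    rw [Finset.sum_mul]
    simp [hterm_right]
  · intro j
    rw [Finset.mul_sum]
    simp [hterm_left]
end

section
/- Let A be a C*-algebra, let m ≥ 1, and let w : Fin m → A satisfy relations (a)–(c). Define u := ∑_{i ∈ Fin m} (w i * w (i+1) * ⋯ * w (i+(m-1))), where for each i the product is taken in increasing order of the offset j = 0,…,m−1 and indices are computed cyclically in Fin m, and let p := ∑_{i ∈ Fin m} star (w i) * w i. Then star u * u = p, u * star u = p, and u commutes with every generator: u * w j = w j * u for all j ∈ Fin m. -/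
/-!
Write `wᵢ* wᵢ` for the source projection and `wᵢ wᵢ*` for the range projection of `wᵢ`.
Relation (c) makes the ranges pairwise orthogonal, hence by (b) so are the sources, and then
`wᵢ wⱼ* = wᵢ (wᵢ* wᵢ)(wⱼ* wⱼ) wⱼ* = 0` for `i ≠ j`; likewise `wₐ w_b = 0` unless `b = a + 1`.
So the products `Pᵢ = wᵢ w_{i+1} ⋯ w_{i+n}` along the cycle are partial isometries with
pairwise orthogonal sources and ranges, the source of `Pᵢ` being that of `w_{i+n}` and its
range that of `wᵢ`. Summing over `i` gives `u* u = u u* = p`, and both `u wⱼ` and `wⱼ u` collapse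
to the single product `wⱼ w_{j+1} ⋯ w_{j+m}` once the cycle has length `n + 1 = m`.
-/

open Finset

section Orthogonal

variable {ι A : Type*} [Fintype ι] [NonUnitalSemiring A] [StarRing A]

theorem star_sum_mul_sum_of_orthogonal (x : ι → A)
    (h : ∀ i j, i ≠ j → star (x i) * x j = 0) :
    star (∑ i, x i) * ∑ i, x i = ∑ i, star (x i) * x i := by
  rw [star_sum, sum_mul_sum]
  exact sum_congr rfl fun i _ => sum_eq_single i (fun j _ hji => h i j hji.symm) (by simp)

theorem sum_mul_star_sum_of_orthogonal (x : ι → A)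
    (h : ∀ i j, i ≠ j → x i * star (x j) = 0) :
    (∑ i, x i) * star (∑ i, x i) = ∑ i, x i * star (x i) := by
  simpa [star_sum] using star_sum_mul_sum_of_orthogonal (fun i => star (x i)) (by simpa using h)

end Orthogonal

/-- The relations (a)–(c), with successor `i ↦ i + 1` on the index type. -/
structure CircleRelations {ι A : Type*} [Add ι] [One ι] [Mul A] [Zero A] [Star A]
    (w : ι → A) : Prop where
  mul_star_mul_self : ∀ i, w i * star (w i) * w i = w i
  star_mul_self_eq_mul_star_succ : ∀ i, star (w i) * w i = w (i + 1) * star (w (i + 1))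
  star_mul_eq_zero : ∀ i j, i ≠ j → star (w i) * w j = 0

/-- `cyclicProd w i n = w i * w (i + 1) * ⋯ * w (i + n)`. -/
def cyclicProd {ι A : Type*} [Add ι] [NatCast ι] [Mul A] (w : ι → A) (i : ι) (n : ℕ) : A :=
  (List.range n).foldl (fun acc j => acc * w (i + ((j + 1 : ℕ) : ι))) (w i)

def cyclicSum {ι A : Type*} [Fintype ι] [Add ι] [NatCast ι] [NonUnitalSemiring A]
    (w : ι → A) (n : ℕ) : A :=
  ∑ i, cyclicProd w i n

section CyclicProd

variable {ι A : Type*} [AddGroupWithOne ι] (w : ι → A)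

@[simp]
theorem cyclicProd_zero [Mul A] (i : ι) : cyclicProd w i 0 = w i := rfl

theorem cyclicProd_succ [Mul A] (i : ι) (n : ℕ) :
    cyclicProd w i (n + 1) = cyclicProd w i n * w (i + n + 1) := by
  simp only [cyclicProd, List.range_succ, List.foldl_append, List.foldl_cons, List.foldl_nil,
    Nat.cast_succ, add_assoc]

theorem mul_cyclicProd [Semigroup A] (j : ι) (n : ℕ) :
    w j * cyclicProd w (j + 1) n = cyclicProd w j (n + 1) := by
  induction n with
  | zero => simp [cyclicProd_succ]
  | succ n ih =>
    rw [cyclicProd_succ, ← mul_assoc, ih, cyclicProd_succ w j (n + 1), Nat.cast_succ,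
      add_assoc j 1, Nat.cast_add_one_comm, ← add_assoc]

end CyclicProd

namespace CircleRelations

variable {ι A : Type*} [AddGroupWithOne ι] [NonUnitalSemiring A] [StarRing A] {w : ι → A}
  (hw : CircleRelations w)
include hw

theorem mul_star_self_mul (i : ι) : w i * (star (w i) * w i) = w i := by
  rw [← mul_assoc, hw.mul_star_mul_self]

theorem star_mul_self_mul_star (i : ι) : star (w i) * w i * star (w i) = star (w i) := by
  simpa [mul_assoc] using congrArg star (hw.mul_star_mul_self i)

theorem mul_star_mul_mul_star_eq_zero {i j : ι} (hij : i ≠ j) :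
    w i * star (w i) * (w j * star (w j)) = 0 := by
  rw [mul_assoc, ← mul_assoc (star (w i)), hw.star_mul_eq_zero i j hij, zero_mul, mul_zero]

theorem mul_star_eq_zero {i j : ι} (hij : i ≠ j) : w i * star (w j) = 0 := by
  have hsource : star (w i) * w i * (star (w j) * w j) = 0 := by
    rw [hw.star_mul_self_eq_mul_star_succ, hw.star_mul_self_eq_mul_star_succ]
    exact hw.mul_star_mul_mul_star_eq_zero (fun h => hij (add_right_cancel h))
  calc w i * star (w j)
      = w i * (star (w i) * w i) * (star (w j) * w j * star (w j)) := by
        rw [hw.mul_star_self_mul, hw.star_mul_self_mul_star]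
    _ = w i * (star (w i) * w i * (star (w j) * w j)) * star (w j) := by simp only [mul_assoc]
    _ = 0 := by rw [hsource, mul_zero, zero_mul]

theorem mul_eq_zero_of_ne_add_one {a b : ι} (hb : b ≠ a + 1) : w a * w b = 0 := by
  rw [← hw.mul_star_self_mul a, hw.star_mul_self_eq_mul_star_succ, mul_assoc, mul_assoc,
    hw.star_mul_eq_zero _ _ hb.symm, mul_zero, mul_zero]

theorem cyclicProd_mul_star_mul_self (i : ι) (n : ℕ) :
    cyclicProd w i n * (star (w (i + n)) * w (i + n)) = cyclicProd w i n := by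
  cases n with
  | zero => simpa using hw.mul_star_self_mul i
  | succ n => rw [cyclicProd_succ, Nat.cast_succ, ← add_assoc, mul_assoc, hw.mul_star_self_mul]

theorem star_cyclicProd_mul_self (i : ι) (n : ℕ) :
    star (cyclicProd w i n) * cyclicProd w i n = star (w (i + n)) * w (i + n) := by
  induction n with
  | zero => simp
  | succ n ih =>
    rw [cyclicProd_succ, star_mul, mul_assoc, ← mul_assoc (star (cyclicProd w i n)), ih,
      hw.star_mul_self_eq_mul_star_succ, hw.mul_star_mul_self, Nat.cast_succ, add_assoc]

theorem star_cyclicProd_mul_eq_zero {i j : ι} (hij : i ≠ j) (n : ℕ) :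
    star (cyclicProd w i n) * cyclicProd w j n = 0 := by
  induction n with
  | zero => exact hw.star_mul_eq_zero i j hij
  | succ n ih =>
    rw [cyclicProd_succ, cyclicProd_succ, star_mul, mul_assoc,
      ← mul_assoc (star (cyclicProd w i n)), ih, zero_mul, mul_zero]

theorem cyclicProd_mul_star_self (i : ι) (n : ℕ) :
    cyclicProd w i n * star (cyclicProd w i n) = w i * star (w i) := by
  induction n with
  | zero => rfl
  | succ n ih =>
    rw [cyclicProd_succ, star_mul, mul_assoc, ← mul_assoc (w (i + n + 1)),
      ← hw.star_mul_self_eq_mul_star_succ, ← mul_assoc, hw.cyclicProd_mul_star_mul_self, ih]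

theorem cyclicProd_mul_star_eq_zero {i j : ι} (hij : i ≠ j) (n : ℕ) :
    cyclicProd w i n * star (cyclicProd w j n) = 0 := by
  induction n with
  | zero => exact hw.mul_star_eq_zero hij
  | succ n ih =>
    rw [cyclicProd_succ, cyclicProd_succ, star_mul, mul_assoc, ← mul_assoc (w (i + n + 1)),
      hw.mul_star_eq_zero (fun h => hij (add_right_cancel (add_right_cancel h))),
      zero_mul, mul_zero]

theorem cyclicProd_mul_eq_zero {i k : ι} {n : ℕ} (hk : k ≠ i + n + 1) :
    cyclicProd w i n * w k = 0 := by
  cases n with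
  | zero => exact hw.mul_eq_zero_of_ne_add_one (by simpa using hk)
  | succ n =>
    rw [Nat.cast_succ, ← add_assoc] at hk
    rw [cyclicProd_succ, mul_assoc, hw.mul_eq_zero_of_ne_add_one hk, mul_zero]

theorem mul_cyclicProd_eq_zero {i j : ι} (hij : i ≠ j + 1) (n : ℕ) :
    w j * cyclicProd w i n = 0 := by
  induction n with
  | zero => exact hw.mul_eq_zero_of_ne_add_one hij
  | succ n ih => rw [cyclicProd_succ, ← mul_assoc, ih, zero_mul]

variable [Fintype ι]

theorem star_cyclicSum_mul_self (n : ℕ) :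
    star (cyclicSum w n) * cyclicSum w n = ∑ i, star (w i) * w i := by
  rw [cyclicSum,
    star_sum_mul_sum_of_orthogonal _ fun i j hij => hw.star_cyclicProd_mul_eq_zero hij n]
  simp only [hw.star_cyclicProd_mul_self]
  exact Equiv.sum_comp (Equiv.addRight (n : ι)) fun i => star (w i) * w i

theorem cyclicSum_mul_star_self (n : ℕ) :
    cyclicSum w n * star (cyclicSum w n) = ∑ i, star (w i) * w i := by
  rw [cyclicSum,
    sum_mul_star_sum_of_orthogonal _ fun i j hij => hw.cyclicProd_mul_star_eq_zero hij n]
  simp only [hw.cyclicProd_mul_star_self, hw.star_mul_self_eq_mul_star_succ]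
  exact (Equiv.sum_comp (Equiv.addRight (1 : ι)) fun i => w i * star (w i)).symm

theorem cyclicSum_mul_comm {n : ℕ} (hn : ((n + 1 : ℕ) : ι) = 0) (j : ι) :
    cyclicSum w n * w j = w j * cyclicSum w n := by
  have hcycle (i : ι) : i + n + 1 = i := by rw [add_assoc, ← Nat.cast_succ, hn, add_zero]
  rw [cyclicSum, sum_mul, mul_sum,
    Fintype.sum_eq_single j fun i hij =>
      hw.cyclicProd_mul_eq_zero (by rw [hcycle]; exact hij.symm),
    Fintype.sum_eq_single (j + 1) fun i hij => hw.mul_cyclicProd_eq_zero hij n,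
    mul_cyclicProd, cyclicProd_succ, hcycle]

end CircleRelations

open Fin.CommRing

/-- Given the circle-algebra relations (Lemma `UniversalCircle` of the paper), the element
`u := ∑ i, w i * w (i+1) * ⋯ * w (i+(m-1))` (each product taken in increasing order of the
offset `j = 0, …, m-1`, indices cyclic in `Fin m`) satisfies `u* u = p = u u*` where
`p := ∑ i, (w i)* (w i)`, and `u` commutes with every generator `w j`. -/
theorem circleRelations_central_unitary {A : Type*} [NonUnitalCStarAlgebra A]
    (m : ℕ) [NeZero m] (w : Fin m → A)
    (hpi : ∀ i : Fin m, w i * star (w i) * w i = w i)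
    (hlink : ∀ i : Fin m, star (w i) * w i = w (i + 1) * star (w (i + 1)))
    (horth : ∀ i j : Fin m, i ≠ j → star (w i) * w j = 0)
    (u : A)
    (hu : u = ∑ i : Fin m,
      (List.range (m - 1)).foldl (fun acc j => acc * w (i + (Fin.ofNat m (j + 1 : ℕ)))) (w i))
    (p : A) (hp : p = ∑ i : Fin m, star (w i) * w i) :
    star u * u = p ∧ u * star u = p ∧ ∀ j : Fin m, u * w j = w j * u := by
  have hw : CircleRelations w := ⟨hpi, hlink, horth⟩
  obtain rfl : u = cyclicSum w (m - 1) := hu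
  have hm : ((m - 1 + 1 : ℕ) : Fin m) = 0 := by
    rw [Nat.sub_add_cancel NeZero.one_le, Fin.natCast_self]
  subst hp
  exact ⟨hw.star_cyclicSum_mul_self _, hw.cyclicSum_mul_star_self _, hw.cyclicSum_mul_comm hm⟩
end

section
/- Let A be a unital C*-algebra, let u, v ∈ A be unitaries, let x, w ∈ A, let M > 0 and ε > 0. Assume ‖x‖ ≤ M, that w commutes with x (w * x = x * w), and that ‖star u * v − w‖ < ε / (2 * M). Then ‖u * x * star u − v * x * star v‖ < ε. -/
/-- Quantitative half of Lemma 2.3(i) of the paper: if `u, v` are unitaries in a unital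
C*-algebra, `‖x‖ ≤ M`, `w` commutes with `x`, and `‖u* v − w‖ < ε / (2M)`, then the
conjugates of `x` by `u` and by `v` are within `ε` of each other. -/
theorem conj_close_of_starMul_close {A : Type*} [CStarAlgebra A]
    (u v x w : A) (M ε : ℝ) (hM : 0 < M) (hε : 0 < ε)
    (hu : star u * u = 1) (hu' : u * star u = 1)
    (hv : star v * v = 1) (hv' : v * star v = 1)
    (hx : ‖x‖ ≤ M) (hcomm : w * x = x * w)
    (hclose : ‖star u * v - w‖ < ε / (2 * M)) :
    ‖u * x * star u - v * x * star v‖ < ε := by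
  rcases subsingleton_or_nontrivial A with hA | hA
  · simpa [Subsingleton.elim (u * x * star u - v * x * star v) 0] using hε
  set c := star u * v with hc
  have hnu : ‖u‖ = 1 := by
    have h := CStarRing.norm_star_mul_self (x := u)
    rw [hu, norm_one] at h
    nlinarith [norm_nonneg u]
  have hnv : ‖star v‖ = 1 := by
    have h := CStarRing.norm_star_mul_self (x := v)
    rw [hv, norm_one] at h
    rw [norm_star]
    nlinarith [norm_nonneg v]
  have key : u * x * star u - v * x * star v = u * (x * c - c * x) * star v := by
    have e1 : u * (x * c) * star v = (u * x * star u) * (v * star v) := by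
      rw [hc]; noncomm_ring
    have e2 : u * (c * x) * star v = (u * star u) * (v * x * star v) := by
      rw [hc]; noncomm_ring
    rw [mul_sub, sub_mul, e1, e2, hv', hu', mul_one, one_mul]
  have e3 : x * c - c * x = x * (c - w) - (c - w) * x := by
    rw [mul_sub, sub_mul, hcomm]; abel
  rw [key]
  have h1 : ‖u * (x * c - c * x) * star v‖ ≤ ‖x * c - c * x‖ := by
    calc ‖u * (x * c - c * x) * star v‖ ≤ ‖u * (x * c - c * x)‖ * ‖star v‖ := norm_mul_le _ _
      _ ≤ ‖u‖ * ‖x * c - c * x‖ * ‖star v‖ := by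
          gcongr; exact norm_mul_le _ _
      _ = ‖x * c - c * x‖ := by rw [hnu, hnv, one_mul, mul_one]
  have h2 : ‖x * c - c * x‖ ≤ 2 * M * ‖c - w‖ := by
    rw [e3]
    calc ‖x * (c - w) - (c - w) * x‖ ≤ ‖x * (c - w)‖ + ‖(c - w) * x‖ := norm_sub_le _ _
      _ ≤ ‖x‖ * ‖c - w‖ + ‖c - w‖ * ‖x‖ := by gcongr <;> exact norm_mul_le _ _
      _ ≤ M * ‖c - w‖ + ‖c - w‖ * M := by
          gcongr
      _ = 2 * M * ‖c - w‖ := by ring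
  have h3 : 2 * M * ‖c - w‖ < ε := by
    have h2M : (0:ℝ) < 2 * M := by linarith
    calc 2 * M * ‖c - w‖ < 2 * M * (ε / (2 * M)) := by
          exact (mul_lt_mul_iff_right₀ h2M).mpr hclose
      _ = ε := by field_simp
  linarith
end

section
/- Let X be a compact metrizable topological space, let α : X ≃ₜ X be a homeomorphism, let B be a unital C*-algebra, let φ : C(X, ℂ) →⋆ₐ[ℂ] B be a star-algebra homomorphism, and let u ∈ B be a unitary such that star u * φ f * u = φ (f ∘ α) for every f ∈ C(X, ℂ). Fix x ∈ X and k ∈ ℕ. If h ∈ C(X, ℂ) satisfies h (α⁻ⁱ x) = 0 for every i = 0, 1, …, k−1 (where α⁻ⁱ denotes the i-th iterate of the inverse homeomorphism), then u ^ k * φ h belongs to A_x. -/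
/-!
A function `h ∈ C(X)` factors as `h = √|h| · (h / √|h|)` with both factors vanishing wherever `h`
does. If `h` vanishes at `x, α⁻¹ x, …, α⁻ᵏ x`, write `h = f * g` this way; covariance gives
`u ^ (k + 1) * φ (f * g) = (u ^ k * φ (f ∘ α⁻¹)) * (u * φ g)`, where `u * φ g` is a generator since
`g x = 0`, and `f ∘ α⁻¹` vanishes at `x, …, α⁻⁽ᵏ⁻¹⁾ x`. Induction on `k` therefore puts `u ^ k * φ h`
in the generated star-subalgebra itself, with no approximation.
-/

namespace RCLike

variable {𝕜 : Type*} [RCLike 𝕜]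

theorem norm_div_sqrt_norm (z : 𝕜) : ‖z / (√‖z‖ : 𝕜)‖ = √‖z‖ := by
  rw [norm_div, norm_ofReal, abs_of_nonneg (Real.sqrt_nonneg _), Real.div_sqrt]

theorem sqrt_norm_mul_div_sqrt_norm (z : 𝕜) : (√‖z‖ : 𝕜) * (z / √‖z‖) = z := by
  rcases eq_or_ne z 0 with rfl | hz
  · simp
  · have : (√‖z‖ : 𝕜) ≠ 0 := ofReal_ne_zero.2 (Real.sqrt_ne_zero'.2 (norm_pos_iff.2 hz))
    exact mul_div_cancel₀ z this

theorem continuous_div_sqrt_norm : Continuous fun z : 𝕜 => z / (√‖z‖ : 𝕜) := by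
  refine continuous_iff_continuousAt.2 fun z => ?_
  rcases eq_or_ne z 0 with rfl | hz
  · -- the quotient has norm `√‖z‖`, which tends to `0`
    have : Filter.Tendsto (fun w : 𝕜 => √‖w‖) (nhds 0) (nhds 0) := by
      simpa using (continuous_norm.sqrt).tendsto (0 : 𝕜)
    rw [ContinuousAt, zero_div, tendsto_zero_iff_norm_tendsto_zero]
    simpa only [norm_div_sqrt_norm] using this
  · refine continuousAt_id.div (continuous_ofReal.comp continuous_norm.sqrt).continuousAt ?_
    exact ofReal_ne_zero.2 (Real.sqrt_ne_zero'.2 (norm_pos_iff.2 hz))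

end RCLike

namespace ContinuousMap

variable {X 𝕜 : Type*} [TopologicalSpace X] [RCLike 𝕜]

theorem exists_mul_eq_of_vanishing (h : C(X, 𝕜)) :
    ∃ f g : C(X, 𝕜), f * g = h ∧ ∀ y, h y = 0 → f y = 0 ∧ g y = 0 := by
  refine ⟨⟨fun y => (√‖h y‖ : 𝕜), by fun_prop⟩,
    ⟨fun y => h y / √‖h y‖, RCLike.continuous_div_sqrt_norm.comp h.continuous⟩,
    ext fun y => RCLike.sqrt_norm_mul_div_sqrt_norm (h y), fun y hy => ?_⟩
  simp [hy]

end ContinuousMap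

theorem semiconjBy_of_mul_eq_one_of_mul_mul_eq {M : Type*} [Monoid M] {u v a b : M}
    (huv : u * v = 1) (h : v * a * u = b) : SemiconjBy u b a := by
  rw [SemiconjBy, ← h, ← mul_assoc, ← mul_assoc, huv, one_mul]

section OrbitBreaking

variable {X 𝕜 B : Type*} [TopologicalSpace X] [RCLike 𝕜] [Semiring B] [StarRing B] [Algebra 𝕜 B]

/-- Its closure is the orbit-breaking subalgebra `A_x`. -/
def orbitBreakingAdjoin [StarModule 𝕜 B] (φ : C(X, 𝕜) →⋆ₐ[𝕜] B) (u : B) (x : X) :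
    StarSubalgebra 𝕜 B :=
  StarAlgebra.adjoin 𝕜 (Set.range ⇑φ ∪ {b : B | ∃ g : C(X, 𝕜), g x = 0 ∧ b = u * φ g})

variable (α : X ≃ₜ X) (φ : C(X, 𝕜) →⋆ₐ[𝕜] B) {u : B}

theorem pow_mul_map_comp_symm_mul_mul_map
    (hcomm : ∀ f : C(X, 𝕜), SemiconjBy u (φ (f.comp (α : C(X, X)))) (φ f))
    (k : ℕ) (f g : C(X, 𝕜)) :
    u ^ k * φ (f.comp (α.symm : C(X, X))) * (u * φ g) = u ^ (k + 1) * φ (f * g) := by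
  have hf : (f.comp (α.symm : C(X, X))).comp (α : C(X, X)) = f := by ext; simp
  calc u ^ k * φ (f.comp (α.symm : C(X, X))) * (u * φ g)
      = u ^ k * (φ (f.comp (α.symm : C(X, X))) * u) * φ g := by simp only [mul_assoc]
    _ = u ^ k * (u * φ f) * φ g := by rw [← (hcomm _).eq, hf]
    _ = u ^ (k + 1) * φ (f * g) := by rw [map_mul, pow_succ]; simp only [mul_assoc]

theorem pow_mul_mem_orbitBreakingAdjoin [StarModule 𝕜 B]
    (hcomm : ∀ f : C(X, 𝕜), SemiconjBy u (φ (f.comp (α : C(X, X)))) (φ f))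
    (x : X) (k : ℕ) (h : C(X, 𝕜)) (hh : ∀ i < k, h ((⇑α.symm)^[i] x) = 0) :
    u ^ k * φ h ∈ orbitBreakingAdjoin φ u x := by
  induction k generalizing h with
  | zero =>
    rw [pow_zero, one_mul]
    exact StarAlgebra.subset_adjoin 𝕜 _ (Or.inl ⟨h, rfl⟩)
  | succ k ih =>
    obtain ⟨f, g, rfl, hfg⟩ := h.exists_mul_eq_of_vanishing
    have hf : u ^ k * φ (f.comp (α.symm : C(X, X))) ∈ orbitBreakingAdjoin φ u x :=
      ih _ fun i hi => by
        simpa [Function.iterate_succ_apply'] using (hfg _ (hh (i + 1) (Nat.succ_lt_succ hi))).1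
    have hg : u * φ g ∈ orbitBreakingAdjoin φ u x :=
      StarAlgebra.subset_adjoin 𝕜 _ (Or.inr ⟨g, (hfg x (hh 0 k.succ_pos)).2, rfl⟩)
    rw [← pow_mul_map_comp_symm_mul_mul_map α φ hcomm]
    exact mul_mem hf hg

end OrbitBreaking

theorem pow_mul_mem_orbitBreaking_general
    {X : Type*} [TopologicalSpace X]
    (α : X ≃ₜ X)
    {B : Type*} [CStarAlgebra B]
    (φ : C(X, ℂ) →⋆ₐ[ℂ] B)
    (u : B) (hu' : u * star u = 1)
    (hcov : ∀ f : C(X, ℂ), star u * φ f * u = φ (f.comp (α : C(X, X))))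
    (x : X) (k : ℕ) (h : C(X, ℂ))
    (hh : ∀ i : ℕ, i < k → h ((⇑α.symm)^[i] x) = 0) :
    u ^ k * φ h ∈
      closure (StarAlgebra.adjoin ℂ
        (Set.range (⇑φ) ∪ {b : B | ∃ g : C(X, ℂ), g x = 0 ∧ b = u * φ g}) : Set B) := by
  have hcomm (f : C(X, ℂ)) : SemiconjBy u (φ (f.comp (α : C(X, X)))) (φ f) :=
    semiconjBy_of_mul_eq_one_of_mul_mul_eq hu' (hcov f)
  exact subset_closure (pow_mul_mem_orbitBreakingAdjoin α φ hcomm x k h hh)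

/-- Lemma 4.2(i) of the paper, in the abstract covariant setting: if `h` vanishes at
`x, α⁻¹ x, …, α⁻⁽ᵏ⁻¹⁾ x`, then `u ^ k * φ h` lies in the orbit-breaking subalgebra
`A_x`, the closed star-subalgebra of `B` generated by `φ(C(X)) ∪ u·φ(C₀(X ∖ {x}))`. -/
theorem pow_mul_mem_orbitBreaking
    {X : Type*} [TopologicalSpace X] [CompactSpace X] [TopologicalSpace.MetrizableSpace X]
    (α : X ≃ₜ X)
    {B : Type*} [CStarAlgebra B]
    (φ : C(X, ℂ) →⋆ₐ[ℂ] B)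
    (u : B) (hu : star u * u = 1) (hu' : u * star u = 1)
    (hcov : ∀ f : C(X, ℂ), star u * φ f * u = φ (f.comp (α : C(X, X))))
    (x : X) (k : ℕ) (h : C(X, ℂ))
    (hh : ∀ i : ℕ, i < k → h ((⇑α.symm)^[i] x) = 0) :
    u ^ k * φ h ∈
      closure (StarAlgebra.adjoin ℂ
        (Set.range (⇑φ) ∪ {b : B | ∃ g : C(X, ℂ), g x = 0 ∧ b = u * φ g}) : Set B) :=
  pow_mul_mem_orbitBreaking_general α φ u hu' hcov x k h hh
end

section
/- Let X be a compact metrizable topological space, let α : X ≃ₜ X be a homeomorphism, let B be a unital C*-algebra, let φ : C(X, ℂ) →⋆ₐ[ℂ] B be a star-algebra homomorphism, and let u ∈ B be a unitary such that star u * φ f * u = φ (f ∘ α) for every f ∈ C(X, ℂ). Fix x ∈ X and k ∈ ℕ. If h ∈ C(X, ℂ) satisfies h (αⁱ x) = 0 for every i = 1, 2, …, k (where αⁱ denotes the i-th iterate of α), then φ h * u ^ k belongs to A_x. -/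
/-!
Every `g : C(X, ℂ)` factors as `√|g| * (g / √|g|)` with both factors continuous and vanishing
wherever `g` does. Writing `φ h * u ^ (k+1) = u * φ (h ∘ α) * u ^ k` by covariance and splitting
`h ∘ α = g₁ * g₂` with `g₁ x = 0` and `g₂` vanishing at `α x, …, α^k x` gives
`φ h * u ^ (k+1) = (u * φ g₁) * (φ g₂ * u ^ k)`, a generator times an element that lies in the
algebra by induction on `k`. So `φ h * u ^ k` lies in the algebraic star-subalgebra generated, and
no approximation is needed.
-/

open Filter Topology

namespace Complex

noncomputable def sqrtNorm (z : ℂ) : ℂ := (√‖z‖ : ℝ)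

-- Equal to `0 / 0 = 0` at `z = 0`, which is the continuous extension since `‖z / √‖z‖‖ = √‖z‖`.
noncomputable def divSqrtNorm (z : ℂ) : ℂ := z / sqrtNorm z

theorem continuous_sqrtNorm : Continuous sqrtNorm := by
  unfold sqrtNorm; fun_prop

theorem norm_divSqrtNorm (z : ℂ) : ‖divSqrtNorm z‖ = √‖z‖ := by
  rcases eq_or_ne z 0 with rfl | hz
  · simp [divSqrtNorm, sqrtNorm]
  have hpos : 0 < √‖z‖ := Real.sqrt_pos.2 (norm_pos_iff.2 hz)
  rw [divSqrtNorm, sqrtNorm, norm_div, norm_real, Real.norm_of_nonneg hpos.le,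
    div_eq_iff hpos.ne', Real.mul_self_sqrt (norm_nonneg z)]

theorem continuous_divSqrtNorm : Continuous divSqrtNorm := by
  refine continuous_iff_continuousAt.2 fun z => ?_
  rcases eq_or_ne z 0 with rfl | hz
  · have h0 : Tendsto (fun w : ℂ => √‖w‖) (𝓝 0) (𝓝 0) :=
      (by fun_prop : Continuous fun w : ℂ => √‖w‖).tendsto' 0 0 (by simp)
    rw [ContinuousAt, show divSqrtNorm 0 = 0 by simp [divSqrtNorm]]
    exact squeeze_zero_norm (fun w => (norm_divSqrtNorm w).le) h0
  · refine continuousAt_id.div continuous_sqrtNorm.continuousAt ?_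
    simpa [sqrtNorm] using hz

theorem sqrtNorm_mul_divSqrtNorm (z : ℂ) : sqrtNorm z * divSqrtNorm z = z := by
  rcases eq_or_ne z 0 with rfl | hz
  · simp [divSqrtNorm, sqrtNorm]
  · exact mul_div_cancel₀ z (by simpa [sqrtNorm] using hz)

end Complex

namespace ContinuousMap

variable {X : Type*} [TopologicalSpace X]

theorem exists_eq_mul_zero_on_zeros (g : C(X, ℂ)) : ∃ g₁ g₂ : C(X, ℂ), g = g₁ * g₂ ∧
    ∀ y, g y = 0 → g₁ y = 0 ∧ g₂ y = 0 := by
  refine ⟨.comp ⟨_, Complex.continuous_sqrtNorm⟩ g, .comp ⟨_, Complex.continuous_divSqrtNorm⟩ g,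
    ?_, fun y hy => ?_⟩
  · ext y; exact (Complex.sqrtNorm_mul_divSqrtNorm (g y)).symm
  · simp [hy, Complex.sqrtNorm, Complex.divSqrtNorm]

end ContinuousMap

theorem mul_eq_mul_of_star_mul_mul_eq {M : Type*} [Monoid M] [Star M] {u a b : M}
    (hu : u * star u = 1) (h : star u * a * u = b) : a * u = u * b := by
  rw [← h, ← mul_assoc, ← mul_assoc, hu, one_mul]

section OrbitBreaking

variable {X : Type*} [TopologicalSpace X] (α : X ≃ₜ X)
  {B : Type*} [Semiring B] [StarRing B] [Algebra ℂ B] [StarModule ℂ B]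
  (φ : C(X, ℂ) →⋆ₐ[ℂ] B) (u : B) (x : X)

theorem mul_pow_mem_adjoin_orbitBreaking (hu : u * star u = 1)
    (hcov : ∀ f : C(X, ℂ), star u * φ f * u = φ (f.comp (α : C(X, X)))) (k : ℕ) (h : C(X, ℂ))
    (hh : ∀ i : ℕ, 1 ≤ i → i ≤ k → h ((⇑α)^[i] x) = 0) :
    φ h * u ^ k ∈ StarAlgebra.adjoin ℂ
      (Set.range (⇑φ) ∪ {b : B | ∃ g : C(X, ℂ), g x = 0 ∧ b = u * φ g}) := by
  induction k generalizing h with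
  | zero =>
    rw [pow_zero, mul_one]
    exact StarAlgebra.subset_adjoin ℂ _ (Or.inl ⟨h, rfl⟩)
  | succ k ih =>
    obtain ⟨g₁, g₂, hg, hzero⟩ := (h.comp (α : C(X, X))).exists_eq_mul_zero_on_zeros
    have hg₁ : g₁ x = 0 := (hzero x (hh 1 le_rfl (by omega))).1
    have hg₂ : ∀ i, 1 ≤ i → i ≤ k → g₂ ((⇑α)^[i] x) = 0 := fun i hi hik => by
      refine (hzero _ ?_).2
      simpa [← Function.iterate_succ_apply'] using hh (i + 1) (by omega) (by omega)
    have hsplit : φ h * u ^ (k + 1) = (u * φ g₁) * (φ g₂ * u ^ k) := by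
      rw [pow_succ', ← mul_assoc, mul_eq_mul_of_star_mul_mul_eq hu (hcov h), hg, map_mul]
      simp only [mul_assoc]
    rw [hsplit]
    exact mul_mem (StarAlgebra.subset_adjoin ℂ _ (Or.inr ⟨g₁, hg₁, rfl⟩)) (ih g₂ hg₂)

end OrbitBreaking

theorem mul_pow_mem_orbitBreaking_general
    {X : Type*} [TopologicalSpace X]
    (α : X ≃ₜ X)
    {B : Type*} [CStarAlgebra B]
    (φ : C(X, ℂ) →⋆ₐ[ℂ] B)
    (u : B) (hu' : u * star u = 1)
    (hcov : ∀ f : C(X, ℂ), star u * φ f * u = φ (f.comp (α : C(X, X))))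
    (x : X) (k : ℕ) (h : C(X, ℂ))
    (hh : ∀ i : ℕ, 1 ≤ i → i ≤ k → h ((⇑α)^[i] x) = 0) :
    φ h * u ^ k ∈
      closure (StarAlgebra.adjoin ℂ
        (Set.range (⇑φ) ∪ {b : B | ∃ g : C(X, ℂ), g x = 0 ∧ b = u * φ g}) : Set B) :=
  subset_closure (mul_pow_mem_adjoin_orbitBreaking α φ u x hu' hcov k h hh)

/-- Lemma 4.2(ii) of the paper, in the abstract covariant setting: if `h` vanishes at `α x, …, α^k x`,
then `φ h * u ^ k` lies in the orbit-breaking subalgebra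
`A_x`, the closed star-subalgebra of `B` generated by `φ(C(X)) ∪ u·φ(C₀(X ∖ {x}))`. -/
theorem mul_pow_mem_orbitBreaking
    {X : Type*} [TopologicalSpace X] [CompactSpace X] [TopologicalSpace.MetrizableSpace X]
    (α : X ≃ₜ X)
    {B : Type*} [CStarAlgebra B]
    (φ : C(X, ℂ) →⋆ₐ[ℂ] B)
    (u : B) (hu : star u * u = 1) (hu' : u * star u = 1)
    (hcov : ∀ f : C(X, ℂ), star u * φ f * u = φ (f.comp (α : C(X, X))))
    (x : X) (k : ℕ) (h : C(X, ℂ))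
    (hh : ∀ i : ℕ, 1 ≤ i → i ≤ k → h ((⇑α)^[i] x) = 0) :
    φ h * u ^ k ∈
      closure (StarAlgebra.adjoin ℂ
        (Set.range (⇑φ) ∪ {b : B | ∃ g : C(X, ℂ), g x = 0 ∧ b = u * φ g}) : Set B) :=
  mul_pow_mem_orbitBreaking_general α φ u hu' hcov x k h hh
end

section
/- Let X be a compact Hausdorff space, X₀ ⊆ X a closed subset, and k ≥ 1. Let B be a C*-algebra, let φ : B → C(X₀, M_k) be a star-algebra homomorphism, and let A := {(b, f) ∈ B × C(X, M_k) : φ b = r f}, where r : C(X, M_k) → C(X₀, M_k) is the restriction homomorphism. Suppose (B_n)_{n∈ℕ} is a sequence of closed star-subalgebras of B such that for every finite set F ⊆ B and every ε > 0 there exists n with dist(b, B_n) < ε for all b ∈ F. Define A_n := {(b, f) ∈ A : b ∈ B_n}. Then for every finite set G ⊆ A and every ε > 0 there exists n such that dist(a, A_n) < ε for all a ∈ G; that is, A is locally approximated by the subalgebras A_n. -/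
open scoped Matrix.Norms.L2Operator

/-!
A point `(b, f)` of the pullback is moved into `Aₙ` by replacing `b` with a nearby `b' ∈ Bₙ`
and correcting `f` by a Tietze extension of the discrepancy `φ b' - φ b` on `X₀`. Since `φ` is
contractive and the extension keeps the sup norm, the correction costs no more than `dist b b'`,
so the distance to `Aₙ` is at most the distance from `b` to `Bₙ`.
-/

open Metric

theorem Metric.infDist_pullback_le {B C D : Type*} [PseudoMetricSpace B] [PseudoMetricSpace C]
    [PseudoMetricSpace D] {φ : B → C} (hφ : LipschitzWith 1 φ) {r : D → C}
    (hr : ∀ d c, ∃ d', r d' = c ∧ dist d d' ≤ dist (r d) c)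
    {S : Set B} (hS : S.Nonempty) {a : B × D} (ha : φ a.1 = r a.2) :
    infDist a {p : B × D | φ p.1 = r p.2 ∧ p.1 ∈ S} ≤ infDist a.1 S := by
  refine (le_infDist hS).mpr fun b hb => ?_
  obtain ⟨d, hd, hdist⟩ := hr a.2 (φ b)
  calc infDist a {p : B × D | φ p.1 = r p.2 ∧ p.1 ∈ S}
      ≤ dist a (b, d) := infDist_le_dist_of_mem ⟨hd.symm, hb⟩
    _ = max (dist a.1 b) (dist a.2 d) := Prod.dist_eq
    _ ≤ dist a.1 b := by
      refine max_le le_rfl (hdist.trans ?_)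
      simpa [← ha] using hφ.dist_le_mul a.1 b

theorem ContinuousMap.exists_restrict_eq_norm_eq {X E : Type*} [TopologicalSpace X]
    [CompactSpace X] [T2Space X] {s : Set X} [CompactSpace s] (𝕜 : Type*) [RCLike 𝕜]
    [NormedAddCommGroup E] [NormedSpace 𝕜 E] [FiniteDimensional 𝕜 E] (g : C(s, E)) :
    ∃ f : C(X, E), f.restrict s = g ∧ ‖f‖ = ‖g‖ := by
  have hs : IsClosed s := (isCompact_iff_compactSpace.mpr ‹_›).isClosed
  obtain ⟨f, hnorm, hrestrict⟩ :=
    BoundedContinuousFunction.exists_norm_eq_domRestrict_eq hs 𝕜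
      (BoundedContinuousFunction.mkOfCompact g)
  refine ⟨f.toContinuousMap, ?_, ?_⟩
  · ext x
    exact congr($hrestrict x)
  · rw [← BoundedContinuousFunction.norm_mkOfCompact, ← BoundedContinuousFunction.norm_mkOfCompact g]
    exact hnorm

theorem ContinuousMap.exists_restrict_eq_dist_le {X E : Type*} [TopologicalSpace X]
    [CompactSpace X] [T2Space X] {s : Set X} [CompactSpace s] (𝕜 : Type*) [RCLike 𝕜]
    [NormedAddCommGroup E] [NormedSpace 𝕜 E] [FiniteDimensional 𝕜 E]
    (f : C(X, E)) (g : C(s, E)) :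
    ∃ f' : C(X, E), f'.restrict s = g ∧ dist f f' ≤ dist (f.restrict s) g := by
  obtain ⟨h, hrestrict, hnorm⟩ := exists_restrict_eq_norm_eq 𝕜 (g - f.restrict s)
  refine ⟨f + h, ?_, ?_⟩
  · ext x
    have hx := congr($hrestrict x)
    simp only [restrict_apply, sub_apply] at hx
    simp [hx]
  · rw [dist_eq_norm, dist_eq_norm, sub_add_cancel_left, norm_neg, hnorm, norm_sub_rev]

theorem pullback_locally_approximated_general
    {X : Type*} [TopologicalSpace X] [CompactSpace X] [T2Space X]
    (X₀ : Set X) (hX₀ : IsClosed X₀)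
    (k : ℕ)
    {B : Type*} [NonUnitalCStarAlgebra B]
    (φ : B →⋆ₙₐ[ℂ] C(X₀, Matrix (Fin k) (Fin k) ℂ))
    (Bn : ℕ → NonUnitalStarSubalgebra ℂ B)
    (hBn : ∀ F : Finset B, ∀ ε : ℝ, 0 < ε →
      ∃ n, ∀ b ∈ F, Metric.infDist b (Bn n : Set B) < ε) :
    ∀ G : Finset (B × C(X, Matrix (Fin k) (Fin k) ℂ)),
      (∀ a ∈ G, φ a.1 = a.2.restrict X₀) →
      ∀ ε : ℝ, 0 < ε →
        ∃ n, ∀ a ∈ G,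
          Metric.infDist a {p : B × C(X, Matrix (Fin k) (Fin k) ℂ) |
            φ p.1 = p.2.restrict X₀ ∧ p.1 ∈ Bn n} < ε := by
  classical
  intro G hG ε hε
  have : CompactSpace X₀ := isCompact_iff_compactSpace.mp hX₀.isCompact
  have hφ : LipschitzWith 1 φ :=
    AddMonoidHomClass.lipschitz_of_bound_nnnorm φ 1 fun b => by
      simpa using NonUnitalStarAlgHom.nnnorm_apply_le φ b
  obtain ⟨n, hn⟩ := hBn (G.image Prod.fst) ε hε
  refine ⟨n, fun a ha => ?_⟩
  calc _ ≤ infDist a.1 (Bn n : Set B) :=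
        infDist_pullback_le hφ (ContinuousMap.exists_restrict_eq_dist_le ℂ)
          ⟨0, (Bn n).zero_mem⟩ (hG a ha)
    _ < ε := hn a.1 (Finset.mem_image_of_mem _ ha)

/-- Lemma 2.18 of the paper: if `A` is the pullback of `φ : B → C(X₀, M_k)` along the
restriction homomorphism `C(X, M_k) → C(X₀, M_k)`, and `B` is locally approximated by
closed star-subalgebras `Bₙ`, then `A` is locally approximated by the corresponding
pullbacks `Aₙ = {(b, f) ∈ A : b ∈ Bₙ}`. -/
theorem pullback_locally_approximated
    {X : Type*} [TopologicalSpace X] [CompactSpace X] [T2Space X]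
    (X₀ : Set X) (hX₀ : IsClosed X₀)
    (k : ℕ) (hk : 1 ≤ k)
    {B : Type*} [NonUnitalCStarAlgebra B]
    (φ : B →⋆ₙₐ[ℂ] C(X₀, Matrix (Fin k) (Fin k) ℂ))
    (Bn : ℕ → NonUnitalStarSubalgebra ℂ B)
    (hBnClosed : ∀ n, IsClosed (Bn n : Set B))
    (hBn : ∀ F : Finset B, ∀ ε : ℝ, 0 < ε →
      ∃ n, ∀ b ∈ F, Metric.infDist b (Bn n : Set B) < ε) :
    ∀ G : Finset (B × C(X, Matrix (Fin k) (Fin k) ℂ)),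
      (∀ a ∈ G, φ a.1 = a.2.restrict X₀) →
      ∀ ε : ℝ, 0 < ε →
        ∃ n, ∀ a ∈ G,
          Metric.infDist a {p : B × C(X, Matrix (Fin k) (Fin k) ℂ) |
            φ p.1 = p.2.restrict X₀ ∧ p.1 ∈ Bn n} < ε :=
  pullback_locally_approximated_general X₀ hX₀ k φ Bn hBn
end
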